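/- For all integers n ≥ m ≥ 2 and every integer k with m^n − m^(n−2) < k < m^n, the number of fuzzy bitopological spaces on an n-element set X with membership values in an m-element chain M in which both fuzzy topologies have exactly k open sets is (τᵢ, τⱼ)_F(n, m, k) = 0. -/

import Mathlib

/-- A fuzzy topology on `Fin n` with membership values in the `m`-element chain `Fin m`:
a collection of fuzzy sets (functions `Fin n → Fin m`) containing the constant function
with the least value, the constant function with the greatest value, and closed under
pointwise (binary) supremum and infimum. -/
def IsFuzzyTopology {n m : ℕ} (hm : m ≠ 0) (τ : Finset (Fin n → Fin m)) : Prop :=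
  (fun _ => (⟨0, Nat.pos_of_ne_zero hm⟩ : Fin m)) ∈ τ ∧
  (fun _ => (⟨m - 1, by omega⟩ : Fin m)) ∈ τ ∧
  (∀ f ∈ τ, ∀ g ∈ τ, f ⊔ g ∈ τ) ∧
  (∀ f ∈ τ, ∀ g ∈ τ, f ⊓ g ∈ τ)

/-- `tauF n m k hm` is the number of fuzzy topologies on an `n`-element set with values in an
`m`-element chain having exactly `k` open sets. -/
noncomputable def tauF (n m k : ℕ) (hm : m ≠ 0) : ℕ :=
  Nat.card {τ : Finset (Fin n → Fin m) // IsFuzzyTopology hm τ ∧ τ.card = k}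

/-- `biTauF n m k hm` is the number of fuzzy bitopological spaces (unordered pairs of fuzzy
topologies, allowing equal ones) on an `n`-element set with values in an `m`-element chain in
which both topologies have exactly `k` open sets. -/
noncomputable def biTauF (n m k : ℕ) (hm : m ≠ 0) : ℕ :=
  Nat.card (Sym2 {τ : Finset (Fin n → Fin m) // IsFuzzyTopology hm τ ∧ τ.card = k})

/-! A fuzzy topology is in particular a sublattice `L` of the finite lattice of maps
`Fin n → Fin m`. If `L` interpolates a map `g` at every pair of points, say by `f x y`, then
`g = ⨆ x, ⨅ y, f x y` lies in `L`. So a proper sublattice misses some `g` on some pair `{x, y}`,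
and then omits all `m ^ (n - 2)` maps agreeing with `g` on `{x, y}`: its size is either `m ^ n`
or at most `m ^ n - m ^ (n - 2)`. -/

open Finset

section

variable {X β : Type*} [Fintype X]

theorem card_filter_forall_mem_apply_eq [DecidableEq X] [Fintype β] [DecidableEq β]
    (s : Finset X) (g : X → β) :
    #{f : X → β | ∀ z ∈ s, f z = g z} = Fintype.card β ^ (Fintype.card X - #s) := by
  have hpi : ({f : X → β | ∀ z ∈ s, f z = g z} : Finset _) =
      Fintype.piFinset fun z => if z ∈ s then {g z} else univ := by
    ext f
    simp only [mem_filter, mem_univ, true_and, Fintype.mem_piFinset]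
    refine forall_congr' fun z => ?_
    split_ifs with hz <;> simp [hz]
  rw [hpi, Fintype.card_piFinset]
  simp only [apply_ite card, card_singleton, card_univ]
  rw [prod_ite, prod_const_one, one_mul, prod_const, filter_not, filter_mem_eq_inter, univ_inter,
    card_sdiff_of_subset (subset_univ s), card_univ]

theorem IsSublattice.mem_of_forall_pair [Nonempty X] [Lattice β] {L : Set (X → β)}
    (hL : IsSublattice L) {g : X → β} (h : ∀ x y, ∃ f ∈ L, f x = g x ∧ f y = g y) : g ∈ L := by
  choose F hFL hFx hFy using h
  have hinf : ∀ x, univ.inf' univ_nonempty (F x) ∈ L := fun x =>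
    hL.infClosed.finsetInf'_mem _ fun y _ => hFL x y
  convert hL.supClosed.finsetSup'_mem univ_nonempty fun x _ => hinf x
  ext z
  simp only [Finset.sup'_apply, Finset.inf'_apply]
  apply le_antisymm
  · refine le_sup'_of_le _ (mem_univ z) (le_inf' _ _ fun y _ => ?_)
    rw [hFx]
  · refine sup'_le _ _ fun x _ => inf'_le_of_le _ (mem_univ z) ?_
    rw [hFy]

theorem IsSublattice.eq_univ_or_card_le [DecidableEq X] [Nonempty X] [Fintype β] [DecidableEq β]
    [Lattice β] {L : Finset (X → β)} (hL : IsSublattice (L : Set (X → β))) :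
    L = univ ∨ #L ≤ Fintype.card β ^ Fintype.card X - Fintype.card β ^ (Fintype.card X - 2) := by
  rw [or_iff_not_imp_left, ← Ne, ← Finset.ssubset_univ_iff]
  intro hLu
  obtain ⟨g, -, hg⟩ := exists_of_ssubset hLu
  obtain ⟨x, y, hxy⟩ : ∃ x y, ∀ f ∈ L, ¬(f x = g x ∧ f y = g y) := by
    by_contra! h
    exact hg (hL.mem_of_forall_pair h)
  set A : Finset (X → β) := {f | ∀ z ∈ ({x, y} : Finset X), f z = g z}
  have hLA : L ⊆ univ \ A := fun f hf => by
    simpa [A] using hxy f hf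
  have hA : Fintype.card β ^ (Fintype.card X - 2) ≤ #A := by
    rw [card_filter_forall_mem_apply_eq]
    have hxy_card : #({x, y} : Finset X) ≤ 2 := card_le_two
    exact Nat.pow_le_pow_right (Fintype.card_pos_iff.2 ⟨g x⟩) (by omega)
  calc #L ≤ #(univ \ A) := card_le_card hLA
    _ = Fintype.card β ^ Fintype.card X - #A := by
      rw [card_sdiff_of_subset (subset_univ _), card_univ, Fintype.card_fun]
    _ ≤ _ := Nat.sub_le_sub_left hA _

end

theorem IsFuzzyTopology.isSublattice {n m : ℕ} {hm : m ≠ 0} {τ : Finset (Fin n → Fin m)}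
    (hτ : IsFuzzyTopology hm τ) : IsSublattice (τ : Set (Fin n → Fin m)) :=
  ⟨fun _ hf _ hg => hτ.2.2.1 _ hf _ hg, fun _ hf _ hg => hτ.2.2.2 _ hf _ hg⟩

theorem biTauF_gap (n m k : ℕ) (hm : 2 ≤ m)
    (h₁ : m ^ n - m ^ (n - 2) < k) (h₂ : k < m ^ n) :
    biTauF n m k (by omega) = 0 := by
  obtain rfl | hn := Nat.eq_zero_or_pos n
  · simp only [pow_zero, Nat.zero_sub, Nat.sub_self] at h₁ h₂
    omega
  have : Nonempty (Fin n) := ⟨⟨0, hn⟩⟩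
  have : IsEmpty {τ : Finset (Fin n → Fin m) // IsFuzzyTopology (by omega) τ ∧ τ.card = k} := by
    refine ⟨fun ⟨τ, hτ, hk⟩ => ?_⟩
    rcases hτ.isSublattice.eq_univ_or_card_le with h | h
    · simp [h, ← hk] at h₂
    · simp only [Fintype.card_fin, hk] at h
      omega
  rw [biTauF, Nat.card_eq_zero]
  exact .inl inferInstance
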